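/- There exist constants D₁ > 0, D₂ > 0 and γ > 0, depending only on Ω, σ, c and q, such that every solution X(t) = (A(t), B(t), C₁(t), C₂(t)) of the Maxwell–Bloch system with one two-level molecule satisfying the charge constraint |C₁(t)|² + |C₂(t)|² = 1 obeys the a priori bound |X(t)| ≤ D₁·|X(0)|·e^{−γt} + D₂ for all t > 0, where |X| denotes the Euclidean norm of (A, B, C₁, C₂) in ℝ² × ℂ². -/

import Mathlib

/-- The molecular current `j(t) = 2q·Im(conj(C₁(t))·C₂(t))`. -/
noncomputable def mbCurrent (q : ℝ) (C₁ C₂ : ℝ → ℂ) (t : ℝ) : ℝ :=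
  2 * q * ((starRingEnd ℂ) (C₁ t) * C₂ t).im

/-- A solution of the Maxwell–Bloch system with one two-level molecule on `[0,∞)`:
`A' = B`, `B' = -Ω²A - σB + c·j`, `iℏC₁' = ℏω₁C₁ + i·a·C₂`, `iℏC₂' = ℏω₂C₂ - i·a·C₁`,
with `a(t) = (q/c)(A(t) + A_p(t))`. -/
structure IsMBSolution (Ω σ c hbar ω₁ ω₂ q : ℝ) (Ap A B : ℝ → ℝ)
    (C₁ C₂ : ℝ → ℂ) : Prop where
  hA : ∀ t ∈ Set.Ici (0 : ℝ), HasDerivAt A (B t) t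
  hB : ∀ t ∈ Set.Ici (0 : ℝ),
      HasDerivAt B (-Ω ^ 2 * A t - σ * B t + c * mbCurrent q C₁ C₂ t) t
  hC₁ : ∀ t ∈ Set.Ici (0 : ℝ), ∃ d : ℂ, HasDerivAt C₁ d t ∧
      Complex.I * (hbar : ℂ) * d =
        (hbar : ℂ) * (ω₁ : ℂ) * C₁ t
          + Complex.I * ((q / c * (A t + Ap t) : ℝ) : ℂ) * C₂ t
  hC₂ : ∀ t ∈ Set.Ici (0 : ℝ), ∃ d : ℂ, HasDerivAt C₂ d t ∧
      Complex.I * (hbar : ℂ) * d =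
        (hbar : ℂ) * (ω₂ : ℂ) * C₂ t
          - Complex.I * ((q / c * (A t + Ap t) : ℝ) : ℂ) * C₁ t

/-! The charge constraint bounds the current by `|q|`, so `(A, B)` is a damped oscillator driven
by a bounded force, while `C₁, C₂` contribute exactly `1` to `|X|²`. For small `ε` the tilted
energy `V = Ω²A² + B² + 2εAB` is comparable to `A² + B²` and satisfies `V' ≤ -αV + K`, so
Grönwall's inequality makes `V`, hence `A² + B²`, decay exponentially up to a constant. -/

open Real Set

lemma abs_mbCurrent_le {q : ℝ} {C₁ C₂ : ℝ → ℂ} {t : ℝ}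
    (h : ‖C₁ t‖ ^ 2 + ‖C₂ t‖ ^ 2 = 1) : |mbCurrent q C₁ C₂ t| ≤ |q| := by
  have him : |((starRingEnd ℂ) (C₁ t) * C₂ t).im| ≤ ‖C₁ t‖ * ‖C₂ t‖ := by
    simpa using Complex.abs_im_le_norm ((starRingEnd ℂ) (C₁ t) * C₂ t)
  have hamgm : 2 * (‖C₁ t‖ * ‖C₂ t‖) ≤ 1 := by
    nlinarith [sq_nonneg (‖C₁ t‖ - ‖C₂ t‖)]
  rw [mbCurrent, abs_mul, abs_mul, abs_two]
  nlinarith [abs_nonneg q]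

lemma sqrt_le_sqrt_mul_sqrt_mul_exp_add {x y D₁ D₂ γ t : ℝ} (hy : 0 ≤ y) (hD₁ : 0 ≤ D₁)
    (hD₂ : 0 ≤ D₂) (h : x ≤ D₁ * y * exp (-γ * t) + D₂) :
    √x ≤ √D₁ * √y * exp (-(γ / 2) * t) + √D₂ := by
  have hexp : exp (-(γ / 2) * t) ^ 2 = exp (-γ * t) := by
    rw [sq, ← exp_add]; congr 1; ring
  refine (sqrt_le_left (by positivity)).2 (h.trans ?_)
  have hcross : 0 ≤ √D₁ * √y * exp (-(γ / 2) * t) * √D₂ := by positivity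
  calc D₁ * y * exp (-γ * t) + D₂
      = (√D₁ * √y * exp (-(γ / 2) * t)) ^ 2 + √D₂ ^ 2 := by
        rw [mul_pow, mul_pow, sq_sqrt hD₁, sq_sqrt hy, sq_sqrt hD₂, hexp]
    _ ≤ (√D₁ * √y * exp (-(γ / 2) * t) + √D₂) ^ 2 := by nlinarith

lemma le_of_hasDerivAt_le_neg_mul_add {V V' : ℝ → ℝ} {α K : ℝ} (hα : α ≠ 0)
    (hV : ∀ t ∈ Ici (0 : ℝ), HasDerivAt V (V' t) t)
    (hV' : ∀ t ∈ Ici (0 : ℝ), V' t ≤ -α * V t + K) {t : ℝ} (ht : 0 ≤ t) :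
    V t ≤ V 0 * exp (-α * t) + K / α * (1 - exp (-α * t)) := by
  have hbound := le_gronwallBound_of_liminf_deriv_right_le (f := V) (f' := V') (a := 0) (b := t)
    (fun s hs => (hV s hs.1).continuousAt.continuousWithinAt)
    (fun s hs _ hr => (hV s hs.1).hasDerivWithinAt.liminf_right_slope_le hr) le_rfl
    (fun s hs => hV' s hs.1) t ⟨ht, le_rfl⟩
  rw [gronwallBound_of_K_ne_0 (neg_ne_zero.2 hα), sub_zero] at hbound
  convert hbound using 2
  field_simp
  ring

namespace DampedOscillator

/-- A Lyapunov function for `a' = b`, `b' = -Ω²a - σb + g`: the energy alone only dissipates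
in `b`; the small cross term `2εab` makes it dissipate in `a` too. -/
def lyapunov (Ω ε a b : ℝ) : ℝ := Ω ^ 2 * a ^ 2 + b ^ 2 + 2 * ε * (a * b)

variable {Ω σ ε κ : ℝ}

lemma lyapunov_ge (hε : 0 ≤ ε) (a b : ℝ) :
    min (Ω ^ 2 - ε) (1 - ε) * (a ^ 2 + b ^ 2) ≤ lyapunov Ω ε a b := by
  have hab : -(ε * (a ^ 2 + b ^ 2)) ≤ 2 * ε * (a * b) := by
    nlinarith [mul_nonneg hε (sq_nonneg (a + b))]
  have ha := mul_le_mul_of_nonneg_right (min_le_left (Ω ^ 2 - ε) (1 - ε)) (sq_nonneg a)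
  have hb := mul_le_mul_of_nonneg_right (min_le_right (Ω ^ 2 - ε) (1 - ε)) (sq_nonneg b)
  unfold lyapunov
  linarith

lemma lyapunov_le (hε : 0 ≤ ε) (a b : ℝ) :
    lyapunov Ω ε a b ≤ (max (Ω ^ 2) 1 + ε) * (a ^ 2 + b ^ 2) := by
  have hab : 2 * ε * (a * b) ≤ ε * (a ^ 2 + b ^ 2) := by
    nlinarith [mul_nonneg hε (sq_nonneg (a - b))]
  have ha := mul_le_mul_of_nonneg_right (le_max_left (Ω ^ 2) 1) (sq_nonneg a)
  have hb := mul_le_mul_of_nonneg_right (le_max_right (Ω ^ 2) 1) (sq_nonneg b)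
  unfold lyapunov
  linarith

lemma hasDerivAt_lyapunov {A B : ℝ → ℝ} {a' b' t : ℝ} (hA : HasDerivAt A a' t)
    (hB : HasDerivAt B b' t) :
    HasDerivAt (fun s => lyapunov Ω ε (A s) (B s))
      (2 * Ω ^ 2 * A t * a' + 2 * B t * b' + 2 * ε * (a' * B t + A t * b')) t := by
  refine ((((hA.fun_pow 2).const_mul (Ω ^ 2)).fun_add (hB.fun_pow 2)).fun_add
    ((hA.fun_mul hB).const_mul (2 * ε))).congr_deriv ?_
  norm_num
  ring

lemma lyapunov_deriv_le (hκ : 0 < κ) (hκε : κ ≤ ε * Ω ^ 2) (hκσ : κ ≤ σ)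
    (hεσ : ε * (2 * Ω ^ 2 + σ ^ 2) ≤ σ * Ω ^ 2) (a b g : ℝ) :
    let b' := -Ω ^ 2 * a - σ * b + g
    2 * Ω ^ 2 * a * b + 2 * b * b' + 2 * ε * (b * b + a * b')
      ≤ -(κ / 2) * (a ^ 2 + b ^ 2) + 2 * (1 + ε ^ 2) * g ^ 2 / κ := by
  intro b'
  have hΩ : 0 < Ω ^ 2 := (sq_nonneg Ω).lt_of_ne fun h => by
    rw [← h, mul_zero] at hκε
    linarith
  have hε : 0 < ε := pos_of_mul_pos_left (hκ.trans_le hκε) hΩ.le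
  -- the cross term `-2εσab` is absorbed by `εΩ²a² + εσ²b²/Ω²`
  have hfree : Ω ^ 2 * (2 * Ω ^ 2 * a * b + 2 * b * b' + 2 * ε * (b * b + a * b'))
      ≤ Ω ^ 2 * (-κ * (a ^ 2 + b ^ 2) + 2 * b * g + 2 * ε * a * g) := by
    nlinarith [mul_nonneg hε.le (sq_nonneg (Ω ^ 2 * a + σ * b)),
      mul_le_mul_of_nonneg_right hεσ (sq_nonneg b),
      mul_le_mul_of_nonneg_right (mul_le_mul_of_nonneg_right hκε (sq_nonneg a)) hΩ.le,
      mul_le_mul_of_nonneg_right (mul_le_mul_of_nonneg_right hκσ (sq_nonneg b)) hΩ.le]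
  have hyoung : κ / 2 * (a ^ 2 + b ^ 2) + 2 * (1 + ε ^ 2) * g ^ 2 / κ - (2 * b * g + 2 * ε * a * g)
      = ((κ * b - 2 * g) ^ 2 + (κ * a - 2 * ε * g) ^ 2) / (2 * κ) := by
    field_simp
    ring
  have hsquares : 0 ≤ ((κ * b - 2 * g) ^ 2 + (κ * a - 2 * ε * g) ^ 2) / (2 * κ) := by positivity
  linarith [le_of_mul_le_mul_left hfree hΩ]

lemma exists_lyapunov_params (hΩ : 0 < Ω) (hσ : 0 < σ) :
    ∃ ε κ : ℝ, ε < Ω ^ 2 ∧ ε < 1 ∧ 0 < κ ∧ κ ≤ ε * Ω ^ 2 ∧ κ ≤ σ ∧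
      ε * (2 * Ω ^ 2 + σ ^ 2) ≤ σ * Ω ^ 2 := by
  set ε := min (min (Ω ^ 2 / 2) (1 / 2)) (σ * Ω ^ 2 / (2 * Ω ^ 2 + σ ^ 2))
  have hε : 0 < ε := by positivity
  refine ⟨ε, min (ε * Ω ^ 2) σ, ?_, ?_, by positivity, min_le_left _ _, min_le_right _ _, ?_⟩
  · linarith [min_le_left (min (Ω ^ 2 / 2) (1 / 2)) (σ * Ω ^ 2 / (2 * Ω ^ 2 + σ ^ 2)),
      min_le_left (Ω ^ 2 / 2) (1 / 2), pow_pos hΩ 2]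
  · linarith [min_le_left (min (Ω ^ 2 / 2) (1 / 2)) (σ * Ω ^ 2 / (2 * Ω ^ 2 + σ ^ 2)),
      min_le_right (Ω ^ 2 / 2) (1 / 2)]
  · rw [← le_div_iff₀ (by positivity)]
    exact min_le_right _ _

theorem exists_apriori_bound (hΩ : 0 < Ω) (hσ : 0 < σ) (G : ℝ) :
    ∃ D₁ D₂ γ : ℝ, 0 < D₁ ∧ 0 ≤ D₂ ∧ 0 < γ ∧
      ∀ A B g : ℝ → ℝ, (∀ t ∈ Ici (0 : ℝ), HasDerivAt A (B t) t) →
        (∀ t ∈ Ici (0 : ℝ), HasDerivAt B (-Ω ^ 2 * A t - σ * B t + g t) t) →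
        (∀ t ∈ Ici (0 : ℝ), |g t| ≤ G) →
        ∀ t ≥ 0, A t ^ 2 + B t ^ 2 ≤ D₁ * (A 0 ^ 2 + B 0 ^ 2) * exp (-γ * t) + D₂ := by
  obtain ⟨ε, κ, hεΩ, hε1, hκ, hκε, hκσ, hεσ⟩ := exists_lyapunov_params hΩ hσ
  have hε : 0 ≤ ε := (pos_of_mul_pos_left (hκ.trans_le hκε) (sq_nonneg Ω)).le
  set m := min (Ω ^ 2 - ε) (1 - ε)
  set M := max (Ω ^ 2) 1 + ε
  set K := 2 * (1 + ε ^ 2) * G ^ 2 / κ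
  have hm : 0 < m := lt_min (by linarith) (by linarith)
  have hM : 0 < M := by positivity
  have hα : 0 < κ / (2 * M) := by positivity
  refine ⟨M / m, K / (κ / (2 * M)) / m, κ / (2 * M), by positivity, by positivity, hα, ?_⟩
  intro A B g hA hB hg t ht
  set V := fun s => lyapunov Ω ε (A s) (B s)
  have hdecay : ∀ s ∈ Ici (0 : ℝ), 2 * Ω ^ 2 * A s * B s + 2 * B s * (-Ω ^ 2 * A s - σ * B s + g s)
      + 2 * ε * (B s * B s + A s * (-Ω ^ 2 * A s - σ * B s + g s))
      ≤ -(κ / (2 * M)) * V s + K := by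
    intro s hs
    have hgG : g s ^ 2 ≤ G ^ 2 := by
      rw [← sq_abs (g s)]
      exact pow_le_pow_left₀ (abs_nonneg _) (hg s hs) 2
    have hVM : κ / (2 * M) * V s ≤ κ / 2 * (A s ^ 2 + B s ^ 2) := by
      calc κ / (2 * M) * V s ≤ κ / (2 * M) * (M * (A s ^ 2 + B s ^ 2)) :=
            mul_le_mul_of_nonneg_left (lyapunov_le hε _ _) hα.le
        _ = κ / 2 * (A s ^ 2 + B s ^ 2) := by field_simp
    have hKg : 2 * (1 + ε ^ 2) * g s ^ 2 / κ ≤ K := by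
      show _ ≤ 2 * (1 + ε ^ 2) * G ^ 2 / κ
      gcongr
    linarith [lyapunov_deriv_le hκ hκε hκσ hεσ (A s) (B s) (g s)]
  have hVt := le_of_hasDerivAt_le_neg_mul_add hα.ne'
    (fun s hs => hasDerivAt_lyapunov (hA s hs) (hB s hs)) hdecay ht
  have hexp : 0 < exp (-(κ / (2 * M)) * t) := exp_pos _
  have hK : 0 ≤ K / (κ / (2 * M)) := by positivity
  have hlow := lyapunov_ge (Ω := Ω) hε (A t) (B t)
  have hup := mul_le_mul_of_nonneg_right (lyapunov_le (Ω := Ω) hε (A 0) (B 0)) hexp.le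
  rw [div_mul_eq_mul_div, div_mul_eq_mul_div, ← add_div, le_div_iff₀ hm, mul_comm]
  nlinarith

end DampedOscillator

theorem mb_state_apriori_bound_general
    (Ω σ c q : ℝ) (hΩ : 0 < Ω) (hσ : 0 < σ) :
    ∃ D₁ D₂ γ : ℝ, 0 < D₁ ∧ 0 < D₂ ∧ 0 < γ ∧
      ∀ (hbar ω₁ ω₂ : ℝ) (Ap A B : ℝ → ℝ) (C₁ C₂ : ℝ → ℂ),
        0 < hbar → ω₁ < ω₂ → ContinuousOn Ap (Set.Ici 0) →
        IsMBSolution Ω σ c hbar ω₁ ω₂ q Ap A B C₁ C₂ →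
        (∀ t ≥ (0 : ℝ), ‖C₁ t‖ ^ 2 + ‖C₂ t‖ ^ 2 = 1) →
        ∀ t > (0 : ℝ),
          Real.sqrt (A t ^ 2 + B t ^ 2 + ‖C₁ t‖ ^ 2 + ‖C₂ t‖ ^ 2) ≤
            D₁ * Real.sqrt (A 0 ^ 2 + B 0 ^ 2 + ‖C₁ 0‖ ^ 2 + ‖C₂ 0‖ ^ 2) *
              Real.exp (-γ * t) + D₂ := by
  obtain ⟨D₁, D₂, γ, hD₁, hD₂, hγ, hosc⟩ :=
    DampedOscillator.exists_apriori_bound hΩ hσ (|c| * |q|)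
  refine ⟨√D₁, √(D₂ + 1), γ / 2, by positivity, by positivity, by positivity, ?_⟩
  intro hbar ω₁ ω₂ Ap A B C₁ C₂ _ _ _ hsol hcharge t ht
  have hforce : ∀ s ∈ Ici (0 : ℝ), |c * mbCurrent q C₁ C₂ s| ≤ |c| * |q| := fun s hs => by
    rw [abs_mul]
    exact mul_le_mul_of_nonneg_left (abs_mbCurrent_le (hcharge s hs)) (abs_nonneg c)
  have hAB := hosc A B _ hsol.hA hsol.hB hforce t ht.le
  rw [add_assoc _ (‖C₁ t‖ ^ 2), hcharge t ht.le, add_assoc _ (‖C₁ 0‖ ^ 2), hcharge 0 le_rfl]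
  refine sqrt_le_sqrt_mul_sqrt_mul_exp_add (by positivity) hD₁.le (by positivity) ?_
  nlinarith [mul_nonneg hD₁.le (exp_pos (-γ * t)).le]

/-- A priori bound for the full state `X(t) = (A(t),B(t),C₁(t),C₂(t))` in the
Euclidean norm of `ℝ² × ℂ²`, with constants depending only on `Ω, σ, c, q`. -/
theorem mb_state_apriori_bound
    (Ω σ c q : ℝ) (hΩ : 0 < Ω) (hσ : 0 < σ) (hc : 0 < c) (hq : 0 < q) :
    ∃ D₁ D₂ γ : ℝ, 0 < D₁ ∧ 0 < D₂ ∧ 0 < γ ∧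
      ∀ (hbar ω₁ ω₂ : ℝ) (Ap A B : ℝ → ℝ) (C₁ C₂ : ℝ → ℂ),
        0 < hbar → ω₁ < ω₂ → ContinuousOn Ap (Set.Ici 0) →
        IsMBSolution Ω σ c hbar ω₁ ω₂ q Ap A B C₁ C₂ →
        (∀ t ≥ (0 : ℝ), ‖C₁ t‖ ^ 2 + ‖C₂ t‖ ^ 2 = 1) →
        ∀ t > (0 : ℝ),
          Real.sqrt (A t ^ 2 + B t ^ 2 + ‖C₁ t‖ ^ 2 + ‖C₂ t‖ ^ 2) ≤
            D₁ * Real.sqrt (A 0 ^ 2 + B 0 ^ 2 + ‖C₁ 0‖ ^ 2 + ‖C₂ 0‖ ^ 2) *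
              Real.exp (-γ * t) + D₂ :=
  mb_state_apriori_bound_general Ω σ c q hΩ hσ
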